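/- Let A be a unital complex Banach subalgebra of a unital complex Banach algebra B. Suppose there exist a compact Hausdorff space X and a surjective isometric algebra homomorphism φ : A → C(X, ℂ). Then for every a ∈ A, the spectrum of a in B equals the range φ(a)(X). -/
import Mathlib


/-- **Spectral permanence for subalgebras isometrically isomorphic to C(X,ℂ).**
Let `A` be a closed unital complex (Banach) subalgebra of a unital complex Banach
algebra `B`.  Suppose there are a compact Hausdorff space `X` and a surjective
isometric algebra homomorphism `φ : A → C(X, ℂ)`.  Then for every `a ∈ A` the
spectrum of `a` in `B` equals the range of `φ a`. -/
theorem spectral_permanence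
    (B : Type*) [NormedRing B] [NormedAlgebra ℂ B] [CompleteSpace B]
    (A : Subalgebra ℂ B) (hA : IsClosed (A : Set B))
    (X : Type*) [TopologicalSpace X] [CompactSpace X] [T2Space X]
    (φ : A →ₐ[ℂ] C(X, ℂ))
    (hiso : ∀ a : A, ‖φ a‖ = ‖(a : B)‖)
    (hsurj : Function.Surjective φ) :
    ∀ a : A, spectrum ℂ (a : B) = Set.range (φ a) := by
  have hinj : Function.Injective φ := by
    intro x y hxy
    have h1 : ‖((x - y : A) : B)‖ = 0 := by
      rw [← hiso, map_sub, hxy, sub_self, norm_zero]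
    have h2 : ((x - y : A) : B) = 0 := norm_eq_zero.mp h1
    have h3 : (x - y : A) = 0 := Subtype.ext (by simpa using h2)
    exact sub_eq_zero.mp h3
  let e : A ≃ₐ[ℂ] C(X, ℂ) := AlgEquiv.ofBijective φ ⟨hinj, hsurj⟩
  intro a
  apply Set.eq_of_subset_of_subset
  · -- σ_B(a) ⊆ range (φ a)
    intro lam hlam
    by_contra hlr
    -- then φ a - lam is invertible in C(X,ℂ), hence a - lam invertible in A, hence in B
    have hspecA : spectrum ℂ a = Set.range (φ a) := by
      rw [← AlgEquiv.spectrum_eq e a]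
      exact (e a).spectrum_eq_range
    have hlamA : lam ∉ spectrum ℂ a := by rw [hspecA]; exact hlr
    have hu : IsUnit (algebraMap ℂ A lam - a) := not_not.mp hlamA
    have := hu.map A.val
    simp only [map_sub, Subalgebra.coe_val] at this
    have : IsUnit (algebraMap ℂ B lam - (a : B)) := by
      simpa using this
    exact (spectrum.mem_iff.mp hlam) this
  · -- range (φ a) ⊆ σ_B(a)
    rintro lam ⟨x₀, hx₀⟩
    rw [spectrum.mem_iff]
    intro hu
    obtain ⟨u, hu'⟩ := hu
    set f : C(X, ℂ) := φ a - algebraMap ℂ C(X, ℂ) lam with hf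
    have hfx₀ : f x₀ = 0 := by simp [hf, hx₀]
    set d : B := ((u⁻¹ : Bˣ) : B) with hd
    have hdpos : (0:ℝ) < ‖d‖ + 1 := by positivity
    set ε : ℝ := (2 * (‖d‖ + 1))⁻¹ with hε
    have hεpos : (0:ℝ) < ε := by positivity
    -- Urysohn function
    have hUopen : IsOpen {x : X | ‖f x‖ < ε} := by
      have : Continuous fun x => ‖f x‖ := (map_continuous f).norm
      exact isOpen_lt this continuous_const
    obtain ⟨g, hg0, hg1, hg01⟩ := exists_continuous_zero_one_of_isClosed
      (hUopen.isClosed_compl) (isClosed_singleton (x := x₀))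
      (by
        simp only [Set.disjoint_singleton_right, Set.mem_compl_iff, Set.mem_setOf_eq, not_not]
        simp [hfx₀, hεpos])
    set gc : C(X, ℂ) := (ContinuousMap.mk Complex.ofReal Complex.continuous_ofReal).comp g
      with hgc
    have hgcx₀ : gc x₀ = 1 := by
      simp [hgc, hg1 (Set.mem_singleton x₀)]
    have hgcnorm : ‖gc‖ = 1 := by
      apply le_antisymm
      · apply (ContinuousMap.norm_le _ zero_le_one).mpr
        intro x
        simp only [hgc, ContinuousMap.comp_apply, ContinuousMap.coe_mk]
        rw [Complex.norm_real]
        exact abs_le.mpr ⟨by linarith [(hg01 x).1], (hg01 x).2⟩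
      · calc (1:ℝ) = ‖gc x₀‖ := by simp [hgcx₀]
          _ ≤ ‖gc‖ := gc.norm_coe_le_norm x₀
    have hfg : ‖f * gc‖ ≤ ε := by
      apply (ContinuousMap.norm_le _ hεpos.le).mpr
      intro x
      by_cases hx : ‖f x‖ < ε
      · have : ‖gc x‖ ≤ 1 := by
          simp only [hgc, ContinuousMap.comp_apply, ContinuousMap.coe_mk]
          rw [Complex.norm_real]
          exact abs_le.mpr ⟨by linarith [(hg01 x).1], (hg01 x).2⟩
        calc ‖(f * gc) x‖ = ‖f x‖ * ‖gc x‖ := by simp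
          _ ≤ ‖f x‖ * 1 := by gcongr
          _ ≤ ε := by simpa using hx.le
      · have : g x = 0 := hg0 hx
        simp only [ContinuousMap.mul_apply, hgc, ContinuousMap.comp_apply,
          ContinuousMap.coe_mk, this, Complex.ofReal_zero, mul_zero, norm_zero]
        exact hεpos.le
    -- pull back
    set b : A := e.symm gc with hb
    have hφb : φ b = gc := e.apply_symm_apply gc
    set c : A := a - algebraMap ℂ A lam with hc
    have hφc : φ c = f := by simp [hc, hf, map_sub, AlgEquiv.commutes]
    have hcb : ‖((c * b : A) : B)‖ ≤ ε := by
      rw [← hiso]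
      calc ‖φ (c * b)‖ = ‖f * gc‖ := by rw [map_mul, hφc, hφb]
        _ ≤ ε := hfg
    have hbnorm : ‖(b : B)‖ = 1 := by rw [← hiso, hφb, hgcnorm]
    -- d * (c * b) = -b since u = lam - a = -c
    have hcB : ((c : A) : B) = -(algebraMap ℂ B lam - (a : B)) := by
      simp [hc, sub_eq_add_neg]
    have hdc : d * ((c : A) : B) = -1 := by
      rw [hcB, mul_neg, ← hu', hd]
      simp
    have key : (b : B) = -(d * ((c * b : A) : B)) := by
      have : ((c * b : A) : B) = ((c : A) : B) * ((b : A) : B) := by push_cast; ring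
      rw [this, ← mul_assoc, hdc]
      simp
    have : (1:ℝ) ≤ ‖d‖ * ε := by
      calc (1:ℝ) = ‖(b : B)‖ := hbnorm.symm
        _ = ‖d * ((c * b : A) : B)‖ := by rw [key, norm_neg]
        _ ≤ ‖d‖ * ‖((c * b : A) : B)‖ := norm_mul_le _ _
        _ ≤ ‖d‖ * ε := by gcongr
    have hlt : ‖d‖ * ε < 1 := by
      rw [hε]
      rw [mul_inv_lt_iff₀ (by positivity)]
      nlinarith [norm_nonneg d]
    linarith
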